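/- Assume δ is ramified, i.e. there exists u ∈ ℤ_pˣ with δ(u) ≠ 0. Then every K₁-invariant element f of Ind_P^G ε_δ takes values in the line k × {0}: f(g)₂ = 0 for all g ∈ G. (The hard direction of Proposition 2.2 of the paper: the K₁-invariants of Ind_P^G ε_δ coincide with those of its subrepresentation Ind_P^G χ.) -/

import Mathlib

/-!
Write `ε_δ(b)` for the unipotent matrix `!![1, δ (a / d); 0, 1]` attached to `b = !![a, *; 0, d]`.
If `b ∈ P` and `g⁻¹ b g ∈ K₁`, then `K₁`-invariance gives `f g = f (b g) = χ(b) ε_δ(b) f g`, and a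
vector fixed by `χ(b) ε_δ(b)` with `δ (a / d) ≠ 0` has second coordinate `0`. Ramification
provides `v ≡ 1 mod p` with `δ v ≠ 0`: take `v = u ^ (p - 1)`, for which `δ v = (p - 1) δ u = -δ u`
in characteristic `p`. Then `b = diag(v, 1)` serves `g = 1`, and `b = diag(1, v)` serves
`g = w u(x) = !![0, 1; 1, x]` for `x ∈ ℤ_p`. Since second coordinates only get multiplied by a
scalar under left translation by `P`, it remains to note that every element of `GL₂(ℚ_p)` lies in
`P · !![1, 0; e, 1]` with `|e| < 1` (a subset of `P K₁`) or in `P w u(x)` with `|x| ≤ 1`.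
-/

open Matrix

/-- membership in `K_n = {g ∈ GL₂(ℤ_p) : g ≡ 1 (mod pⁿ)}`:
every entry of `g − 1` has norm at most `p^{-n}`. -/
def InKn (p : ℕ) [Fact p.Prime] (n : ℕ) (u : GL (Fin 2) ℚ_[p]) : Prop :=
  ∀ i j, ‖(u : Matrix (Fin 2) (Fin 2) ℚ_[p]) i j
            - (1 : Matrix (Fin 2) (Fin 2) ℚ_[p]) i j‖ ≤ (p : ℝ) ^ (-(n : ℤ))

theorem PadicInt.norm_pow_sub_one_sub_one_lt_one {p : ℕ} [Fact p.Prime] {z : ℤ_[p]}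
    (hz : ‖z‖ = 1) : ‖z ^ (p - 1) - 1‖ < 1 := by
  have hz0 : toZMod z ≠ 0 := ((PadicInt.isUnit_iff.mpr hz).map toZMod).ne_zero
  rw [← PadicInt.mem_nonunits, ← IsLocalRing.mem_maximalIdeal, ← ker_toZMod, RingHom.mem_ker,
    map_sub, map_pow, map_one, ZMod.pow_card_sub_one_eq_one hz0, sub_self]

theorem Padic.norm_pow_sub_one_sub_one_le {p : ℕ} [Fact p.Prime] {u : ℚ_[p]} (hu : ‖u‖ = 1) :
    ‖u ^ (p - 1) - 1‖ ≤ (p : ℝ) ^ (-1 : ℤ) := by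
  have : ‖u ^ (p - 1) - 1‖ < 1 := PadicInt.norm_pow_sub_one_sub_one_lt_one (z := ⟨u, hu.le⟩) hu
  rw [Padic.norm_le_pow_iff_norm_lt_pow_add_one]
  simpa using this

section Additive
variable {G A : Type*} [Group G] [AddGroup A] {δ : G → A}

theorem map_inv_of_map_mul (hδ : ∀ x y, δ (x * y) = δ x + δ y) (x : G) : δ x⁻¹ = -δ x :=
  map_inv (MonoidHom.mk' (fun x => Multiplicative.ofAdd (δ x)) hδ) x

theorem map_pow_of_map_mul (hδ : ∀ x y, δ (x * y) = δ x + δ y) (x : G) (n : ℕ) :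
    δ (x ^ n) = n • δ x :=
  map_pow (MonoidHom.mk' (fun x => Multiplicative.ofAdd (δ x)) hδ) x n

end Additive

theorem exists_unit_norm_sub_one_le_and_ne_zero {p : ℕ} [Fact p.Prime] {k : Type*} [Field k]
    [CharP k p] {δ : ℚ_[p]ˣ → k} (hδ : ∀ x y, δ (x * y) = δ x + δ y)
    (hram : ∃ u : ℚ_[p]ˣ, ‖(u : ℚ_[p])‖ = 1 ∧ δ u ≠ 0) :
    ∃ v : ℚ_[p]ˣ, ‖(v : ℚ_[p]) - 1‖ ≤ (p : ℝ) ^ (-1 : ℤ) ∧ δ v ≠ 0 := by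
  obtain ⟨u, hu, hδu⟩ := hram
  refine ⟨u ^ (p - 1), by simpa using Padic.norm_pow_sub_one_sub_one_le hu, ?_⟩
  have hp : ((p - 1 : ℕ) : k) = -1 := by
    rw [Nat.cast_pred (Fact.out : p.Prime).pos, CharP.cast_eq_zero, zero_sub]
  rwa [map_pow_of_map_mul hδ, nsmul_eq_mul, hp, neg_one_mul, neg_ne_zero]

section Matrices
variable {F : Type*} [Field F]

noncomputable def upperTriangular (a d : Fˣ) (b : F) : GL (Fin 2) F :=
  ⟨!![(a : F), b; 0, d], !![(a⁻¹ : Fˣ), -(a⁻¹ * b * d⁻¹ : F); 0, (d⁻¹ : Fˣ)],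
    by simp [one_fin_two]; field_simp; ring, by simp [one_fin_two]⟩

noncomputable def lowerUnipotent (e : F) : GL (Fin 2) F :=
  ⟨!![1, 0; e, 1], !![1, 0; -e, 1], by simp [one_fin_two], by simp [one_fin_two]⟩

noncomputable def weylUnipotent (x : F) : GL (Fin 2) F :=
  ⟨!![0, 1; 1, x], !![-x, 1; 1, 0], by simp [one_fin_two], by simp [one_fin_two]⟩

theorem diag_ne_zero_of_apply_one_zero {b : GL (Fin 2) F}
    (hb : (b : Matrix (Fin 2) (Fin 2) F) 1 0 = 0) :
    (b : Matrix (Fin 2) (Fin 2) F) 0 0 ≠ 0 ∧ (b : Matrix (Fin 2) (Fin 2) F) 1 1 ≠ 0 := by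
  have h := b.det_ne_zero
  rwa [det_fin_two, hb, mul_zero, sub_zero, mul_ne_zero_iff] at h

theorem exists_eq_mul_lowerUnipotent (g : GL (Fin 2) F)
    (hD : (g : Matrix (Fin 2) (Fin 2) F) 1 1 ≠ 0) :
    ∃ b : GL (Fin 2) F, (b : Matrix (Fin 2) (Fin 2) F) 1 0 = 0 ∧
      g = b * lowerUnipotent ((g : Matrix (Fin 2) (Fin 2) F) 1 0 / g 1 1) := by
  refine ⟨g * (lowerUnipotent _)⁻¹, ?_, (inv_mul_cancel_right g _).symm⟩
  simp [lowerUnipotent, Matrix.mul_apply, Fin.sum_univ_two]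
  field_simp
  ring

theorem exists_eq_mul_weylUnipotent (g : GL (Fin 2) F)
    (hC : (g : Matrix (Fin 2) (Fin 2) F) 1 0 ≠ 0) :
    ∃ b : GL (Fin 2) F, (b : Matrix (Fin 2) (Fin 2) F) 1 0 = 0 ∧
      g = b * weylUnipotent ((g : Matrix (Fin 2) (Fin 2) F) 1 1 / g 1 0) := by
  refine ⟨g * (weylUnipotent _)⁻¹, ?_, (inv_mul_cancel_right g _).symm⟩
  simp [weylUnipotent, Matrix.mul_apply, Fin.sum_univ_two]
  field_simp
  ring

theorem weylUnipotent_mul_upperTriangular (s : Fˣ) (x : F) :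
    weylUnipotent x * upperTriangular s 1 ((s - 1) * x) =
      upperTriangular 1 s 0 * weylUnipotent x := by
  ext : 1
  simp [weylUnipotent, upperTriangular]
  ring

end Matrices

theorem exists_eq_mul_lowerUnipotent_or_weylUnipotent {F : Type*} [NormedField F]
    (g : GL (Fin 2) F) : ∃ b : GL (Fin 2) F, (b : Matrix (Fin 2) (Fin 2) F) 1 0 = 0 ∧
      ((∃ e : F, ‖e‖ < 1 ∧ g = b * lowerUnipotent e) ∨
        ∃ x : F, ‖x‖ ≤ 1 ∧ g = b * weylUnipotent x) := by
  rcases lt_or_ge ‖(g : Matrix (Fin 2) (Fin 2) F) 1 0‖ ‖(g : Matrix (Fin 2) (Fin 2) F) 1 1‖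
    with hlt | hle
  · have hD : (g : Matrix (Fin 2) (Fin 2) F) 1 1 ≠ 0 :=
      norm_pos_iff.mp ((norm_nonneg _).trans_lt hlt)
    obtain ⟨b, hb, hg⟩ := exists_eq_mul_lowerUnipotent g hD
    refine ⟨b, hb, .inl ⟨_, ?_, hg⟩⟩
    rwa [norm_div, div_lt_one (norm_pos_iff.mpr hD)]
  · have hC : (g : Matrix (Fin 2) (Fin 2) F) 1 0 ≠ 0 := by
      intro hC
      have hD : (g : Matrix (Fin 2) (Fin 2) F) 1 1 = 0 :=
        norm_le_zero_iff.mp (by simpa [hC] using hle)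
      exact g.det_ne_zero (by rw [det_fin_two, hC, hD]; ring)
    obtain ⟨b, hb, hg⟩ := exists_eq_mul_weylUnipotent g hC
    refine ⟨b, hb, .inr ⟨_, ?_, hg⟩⟩
    rwa [norm_div, div_le_one (norm_pos_iff.mpr hC)]

section Induced
variable {F k : Type*} [Field F] [Field k]

/-- The transformation rule of `Ind_P^G ε_δ`: `f (b g) = χ(b) ε_δ(b) f(g)` for `b = !![a, *; 0, d]`,
where `ε_δ(b) = !![1, δ (a / d); 0, 1]` acts on column vectors. -/
def IsEpsilonEquivariant (χ₁ χ₂ : Fˣ →* kˣ) (δ : Fˣ → k) (f : GL (Fin 2) F → k × k) : Prop :=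
  ∀ b g : GL (Fin 2) F,
    (b : Matrix (Fin 2) (Fin 2) F) 1 0 = 0 →
    ∀ a d : Fˣ,
      (b : Matrix (Fin 2) (Fin 2) F) 0 0 = (a : F) →
      (b : Matrix (Fin 2) (Fin 2) F) 1 1 = (d : F) →
      f (b * g) = ((χ₁ a : k) * (χ₂ d : k) * ((f g).1 + δ (a * d⁻¹) * (f g).2),
                   (χ₁ a : k) * (χ₂ d : k) * (f g).2)

namespace IsEpsilonEquivariant
variable {χ₁ χ₂ : Fˣ →* kˣ} {δ : Fˣ → k} {f : GL (Fin 2) F → k × k}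

theorem snd_mul_eq_zero (hf : IsEpsilonEquivariant χ₁ χ₂ δ f) {b g : GL (Fin 2) F}
    (hb : (b : Matrix (Fin 2) (Fin 2) F) 1 0 = 0) (hg : (f g).2 = 0) : (f (b * g)).2 = 0 := by
  obtain ⟨ha, hd⟩ := diag_ne_zero_of_apply_one_zero hb
  rw [hf b g hb (Units.mk0 _ ha) (Units.mk0 _ hd) rfl rfl]
  exact mul_eq_zero_of_right _ hg

theorem snd_eq_zero_of_mul_eq (hf : IsEpsilonEquivariant χ₁ χ₂ δ f) {b g : GL (Fin 2) F}
    {a d : Fˣ} (hb : (b : Matrix (Fin 2) (Fin 2) F) 1 0 = 0)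
    (ha : (b : Matrix (Fin 2) (Fin 2) F) 0 0 = a) (hd : (b : Matrix (Fin 2) (Fin 2) F) 1 1 = d)
    (hδ : δ (a * d⁻¹) ≠ 0) (hfix : f (b * g) = f g) : (f g).2 = 0 := by
  have h := hf b g hb a d ha hd
  rw [hfix, Prod.ext_iff] at h
  obtain ⟨h₁, h₂⟩ := h
  by_contra hy
  have hc : (χ₁ a : k) * χ₂ d = 1 := (mul_eq_right₀ hy).mp h₂.symm
  rw [hc, one_mul, left_eq_add, mul_eq_zero] at h₁
  exact h₁.elim hδ hy

end IsEpsilonEquivariant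

end Induced

section Padic
variable {p : ℕ} [Fact p.Prime]

theorem inKn_upperTriangular {n : ℕ} {a d : ℚ_[p]ˣ} {b : ℚ_[p]}
    (ha : ‖(a : ℚ_[p]) - 1‖ ≤ (p : ℝ) ^ (-(n : ℤ))) (hd : ‖(d : ℚ_[p]) - 1‖ ≤ (p : ℝ) ^ (-(n : ℤ)))
    (hb : ‖b‖ ≤ (p : ℝ) ^ (-(n : ℤ))) : InKn p n (upperTriangular a d b) := by
  rw [_root_.zpow_neg, zpow_natCast] at ha hd hb
  intro i j
  fin_cases i <;> fin_cases j <;> simp [upperTriangular, ha, hd, hb]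

theorem inKn_lowerUnipotent {n : ℕ} {e : ℚ_[p]} (he : ‖e‖ ≤ (p : ℝ) ^ (-(n : ℤ))) :
    InKn p n (lowerUnipotent e) := by
  rw [_root_.zpow_neg, zpow_natCast] at he
  intro i j
  fin_cases i <;> fin_cases j <;> simp [lowerUnipotent, he]

namespace IsEpsilonEquivariant
variable {k : Type*} [Field k] {χ₁ χ₂ : ℚ_[p]ˣ →* kˣ} {δ : ℚ_[p]ˣ → k}
  {f : GL (Fin 2) ℚ_[p] → k × k}

theorem snd_one_eq_zero (hf : IsEpsilonEquivariant χ₁ χ₂ δ f)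
    (hK1 : ∀ g u, InKn p 1 u → f (g * u) = f g) {v : ℚ_[p]ˣ}
    (hv : ‖(v : ℚ_[p]) - 1‖ ≤ (p : ℝ) ^ (-1 : ℤ)) (hδv : δ v ≠ 0) : (f 1).2 = 0 := by
  refine hf.snd_eq_zero_of_mul_eq (b := upperTriangular v 1 0) (a := v) (d := 1) rfl rfl rfl
    (by simpa using hδv) ?_
  rw [mul_one, ← one_mul (upperTriangular v 1 0)]
  exact hK1 1 _ (inKn_upperTriangular (by simpa using hv) (by simp) (by simp))

theorem snd_weylUnipotent_eq_zero (hf : IsEpsilonEquivariant χ₁ χ₂ δ f)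
    (hK1 : ∀ g u, InKn p 1 u → f (g * u) = f g) (hδ : ∀ x y, δ (x * y) = δ x + δ y)
    {v : ℚ_[p]ˣ} (hv : ‖(v : ℚ_[p]) - 1‖ ≤ (p : ℝ) ^ (-1 : ℤ)) (hδv : δ v ≠ 0)
    {x : ℚ_[p]} (hx : ‖x‖ ≤ 1) : (f (weylUnipotent x)).2 = 0 := by
  refine hf.snd_eq_zero_of_mul_eq (b := upperTriangular 1 v 0) (a := 1) (d := v) rfl rfl rfl
    (by rwa [one_mul, map_inv_of_map_mul hδ, neg_ne_zero]) ?_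
  have hvx : ‖((v : ℚ_[p]) - 1) * x‖ ≤ (p : ℝ) ^ (-1 : ℤ) := by
    rw [norm_mul]
    exact (mul_le_of_le_one_right (norm_nonneg _) hx).trans hv
  rw [← weylUnipotent_mul_upperTriangular]
  exact hK1 _ _ (inKn_upperTriangular (by simpa using hv) (by simp) (by simpa using hvx))

theorem snd_lowerUnipotent_eq_zero (hf : IsEpsilonEquivariant χ₁ χ₂ δ f)
    (hK1 : ∀ g u, InKn p 1 u → f (g * u) = f g) {v : ℚ_[p]ˣ}
    (hv : ‖(v : ℚ_[p]) - 1‖ ≤ (p : ℝ) ^ (-1 : ℤ)) (hδv : δ v ≠ 0)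
    {e : ℚ_[p]} (he : ‖e‖ < 1) : (f (lowerUnipotent e)).2 = 0 := by
  have he' : ‖e‖ ≤ (p : ℝ) ^ (-((1 : ℕ) : ℤ)) := by
    rw [Padic.norm_le_pow_iff_norm_lt_pow_add_one]
    simpa using he
  rw [← one_mul (lowerUnipotent e), hK1 1 _ (inKn_lowerUnipotent he')]
  exact hf.snd_one_eq_zero hK1 hv hδv

end IsEpsilonEquivariant

end Padic

theorem statement_1 (p : ℕ) [Fact p.Prime] (k : Type*) [Field k] [CharP k p]
    (χ₁ χ₂ : ℚ_[p]ˣ →* kˣ)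
    -- `δ : ℚ_pˣ → (k, +)` is a homomorphism:
    (δ : ℚ_[p]ˣ → k) (hδ : ∀ x y : ℚ_[p]ˣ, δ (x * y) = δ x + δ y)
    -- `δ` is ramified: nonzero at some unit `u ∈ ℤ_pˣ`:
    (hram : ∃ u : ℚ_[p]ˣ, ‖(u : ℚ_[p])‖ = 1 ∧ δ u ≠ 0)
    (f : GL (Fin 2) ℚ_[p] → k × k)
    -- the transformation rule of `Ind_P^G ε_δ`:
    (htrans : ∀ b g : GL (Fin 2) ℚ_[p],
      (b : Matrix (Fin 2) (Fin 2) ℚ_[p]) 1 0 = 0 →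
      ∀ a d : ℚ_[p]ˣ,
        (b : Matrix (Fin 2) (Fin 2) ℚ_[p]) 0 0 = (a : ℚ_[p]) →
        (b : Matrix (Fin 2) (Fin 2) ℚ_[p]) 1 1 = (d : ℚ_[p]) →
        f (b * g) = ((χ₁ a : k) * (χ₂ d : k) * ((f g).1 + δ (a * d⁻¹) * (f g).2),
                     (χ₁ a : k) * (χ₂ d : k) * (f g).2))
    -- `f` is `K₁`-invariant:
    (hK1 : ∀ g u, InKn p 1 u → f (g * u) = f g) :
    ∀ g, (f g).2 = 0 := by
  have hf : IsEpsilonEquivariant χ₁ χ₂ δ f := htrans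
  obtain ⟨v, hv, hδv⟩ := exists_unit_norm_sub_one_le_and_ne_zero hδ hram
  intro g
  obtain ⟨b, hb, ⟨e, he, rfl⟩ | ⟨x, hx, rfl⟩⟩ := exists_eq_mul_lowerUnipotent_or_weylUnipotent g
  · exact hf.snd_mul_eq_zero hb (hf.snd_lowerUnipotent_eq_zero hK1 hv hδv he)
  · exact hf.snd_mul_eq_zero hb (hf.snd_weylUnipotent_eq_zero hK1 hδ hv hδv hx)
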